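/- arXiv:2004.11749 — 2 statements merged into one kernel-verified Lean document; each statement's English description precedes it below -/
import Mathlib

section
/- Suppose X carries the topology generated by the family {X_p : p ∈ I}, and suppose h(x) is finite for every x ∈ X. Endow the quotient X/∼ with the partial order [x] ≤ [y] ⟺ h(x) ⊆ h(y) and with the Alexandroff (upper set) topology, in which a set is open if and only if it is an upper set. Then the quotient map s : X → X/∼, s(x) = [x], is continuous and surjective; that is, (X, s) is a stratification of X in the sense of the paper (a poset-stratified space). -/
/-!
The intersection `⋂ p ∈ h x, X_p` is open because `h x` is finite, it contains `x`, and each of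
its points `y` has `h x ⊆ h y`. Hence the preimage of an upper set of `X/∼` contains this open
neighbourhood of each of its points.
-/

open Topology

/-- The equivalence relation `x ∼ y ↔ h x = h y`, where `h x = {p | x ∈ Xp p}`. -/
def covSetoid {X I : Type*} (Xp : I → Set X) : Setoid X :=
  ⟨fun x y => {p : I | x ∈ Xp p} = {p : I | y ∈ Xp p},
   ⟨fun _ => rfl, fun h => h.symm, fun h₁ h₂ => h₁.trans h₂⟩⟩

/-- The Alexandroff topology on `X/∼` associated with the partial order
`[x] ≤ [y] ↔ h x ⊆ h y`: a set is open iff it is an upper set. -/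
def alexandroffTop {X I : Type*} (Xp : I → Set X) :
    TopologicalSpace (Quotient (covSetoid Xp)) where
  IsOpen U := ∀ a b : X, {p : I | a ∈ Xp p} ⊆ {p : I | b ∈ Xp p} →
    Quotient.mk (covSetoid Xp) a ∈ U → Quotient.mk (covSetoid Xp) b ∈ U
  isOpen_univ := fun _ _ _ _ => trivial
  isOpen_inter := fun _ _ hU hV a b hab hmem =>
    ⟨hU a b hab hmem.1, hV a b hab hmem.2⟩
  isOpen_sUnion := fun _ hS a b hab hmem => by
    obtain ⟨T, hT, haT⟩ := hmem
    exact ⟨T, hT, hS T hT a b hab haT⟩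

theorem isOpen_generateFrom_range_biInter {X I : Type*} (Xp : I → Set X) {s : Set I}
    (hs : s.Finite) : IsOpen[TopologicalSpace.generateFrom (Set.range Xp)] (⋂ p ∈ s, Xp p) :=
  @Set.Finite.isOpen_biInter _ _ (TopologicalSpace.generateFrom (Set.range Xp)) _ _ hs
    fun p _ => TopologicalSpace.isOpen_generateFrom_of_mem ⟨p, rfl⟩

/-- If `X` carries the topology generated by the family `Xp` and
every `h x = {p | x ∈ Xp p}` is finite, then the quotient map
`s : X → X/∼` is continuous (for the Alexandroff topology on the quotient)
and surjective: `(X, s)` is a poset-stratified space. -/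
theorem quotientMap_continuous_surjective {X I : Type*} (Xp : I → Set X)
    (hfin : ∀ x : X, {p : I | x ∈ Xp p}.Finite) :
    Continuous[TopologicalSpace.generateFrom (Set.range Xp), alexandroffTop Xp]
      (Quotient.mk (covSetoid Xp)) ∧
    Function.Surjective (Quotient.mk (covSetoid Xp)) := by
  let _ := TopologicalSpace.generateFrom (Set.range Xp)
  refine ⟨continuous_def.2 fun U hU => isOpen_iff_forall_mem_open.2 fun x hx => ?_,
    Quotient.mk_surjective⟩
  refine ⟨⋂ p ∈ {p | x ∈ Xp p}, Xp p, fun y hy => ?_,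
    isOpen_generateFrom_range_biInter Xp (hfin x), Set.mem_iInter₂.2 fun _ hp => hp⟩
  exact hU x y (fun p hp => Set.mem_iInter₂.1 hy p hp) hx
end

section
/- Let Y be a one-point topological space endowed with the sheaf of continuous real-valued functions (so the sections over the unique nonempty open set form the ring C(Y, ℝ) ≅ ℝ and the sections over the empty set form the zero ring), regarded as a locally ringed space. Then Y is isomorphic, in the category of locally ringed spaces, to Spec ℝ. In particular, the underlying topological space of Spec ℝ is a single point (the zero ideal is the only prime ideal of ℝ) and its structure sheaf has global sections isomorphic to ℝ. -/
/-!
Every open neighbourhood of the point of a one-point space is the whole space, so the stalk of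
the structure sheaf is the ring of global sections, here `C(pt, ℝ) ≅ ℝ`. As `Spec ℝ` is a point
too, the unit `Y ⟶ Spec Γ(Y)` of the `Γ ⊣ Spec` adjunction is a homeomorphism inducing
isomorphisms on stalks, hence an isomorphism, and `Spec Γ(Y) ≅ Spec ℝ`.
-/

open AlgebraicGeometry CategoryTheory Limits TopologicalSpace Opposite

universe u v

def ContinuousMap.evalRingEquivOfUnique (X R : Type*) [TopologicalSpace X] [Unique X]
    [Semiring R] [TopologicalSpace R] [IsTopologicalSemiring R] : C(X, R) ≃+* R where
  toFun f := f default
  invFun := ContinuousMap.const X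
  left_inv f := ContinuousMap.ext fun x => by rw [Unique.eq_default x]; rfl
  right_inv _ := rfl
  map_mul' _ _ := rfl
  map_add' _ _ := rfl

lemma TopCat.Presheaf.isIso_Γgerm_of_subsingleton {C : Type u} [Category.{v} C]
    [HasColimits.{v} C] {X : TopCat.{v}} [Subsingleton X] (F : X.Presheaf C) (x : X) :
    IsIso (F.Γgerm x) := by
  have hinit : IsInitial (⟨⊤, True.intro⟩ : OpenNhds x) :=
    IsInitial.ofUniqueHom (fun U => homOfLE fun y _ => Subsingleton.elim x y ▸ U.2)
      fun _ _ => Subsingleton.elim _ _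
  exact isIso_ι_of_isTerminal hinit.op ((OpenNhds.inclusion x).op ⋙ F)

lemma AlgebraicGeometry.StructureSheaf.isIso_toStalk_of_subsingleton (R : Type*) [CommRing R]
    [Subsingleton (PrimeSpectrum R)] (p : PrimeSpectrum R) :
    IsIso (StructureSheaf.toStalk R p) := by
  have hunit : ∀ y ∈ p.asIdeal.primeCompl, IsUnit y := by
    intro y hy
    by_contra hy'
    obtain ⟨M, hM, hyM⟩ := exists_max_ideal_of_mem_nonunits hy'
    exact hy (Subsingleton.elim (⟨M, hM.isPrime⟩ : PrimeSpectrum R) p ▸ hyM)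
  exact (ConcreteCategory.isIso_iff_bijective _).mpr
    (IsLocalization.atUnits R p.asIdeal.primeCompl
      (S := (Spec.structureSheaf R).presheaf.stalk p) hunit).bijective

lemma Topology.IsOpenEmbedding.of_subsingleton {X Y : Type*} [TopologicalSpace X]
    [TopologicalSpace Y] [Subsingleton X] [Subsingleton Y] (f : X → Y) : IsOpenEmbedding f :=
  ⟨.of_subsingleton f, isOpen_discrete _⟩

lemma AlgebraicGeometry.LocallyRingedSpace.isIso_toΓSpec_of_subsingleton
    (X : LocallyRingedSpace) [Unique X.carrier]
    [Subsingleton (PrimeSpectrum (LocallyRingedSpace.Γ.obj (op X)))] : IsIso X.toΓSpec := by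
  have (x : X) : IsIso (X.toΓSpecSheafedSpace.hom.stalkMap x) :=
    @IsIso.of_isIso_fac_left _ _ _ _ _ _ _ _ (StructureSheaf.isIso_toStalk_of_subsingleton _ _)
      (X.presheaf.isIso_Γgerm_of_subsingleton x) (X.toStalk_stalkMap_toΓSpec x)
  have : Subsingleton (Spec.toSheafedSpace.obj (op (LocallyRingedSpace.Γ.obj (op X)))) :=
    ‹Subsingleton (PrimeSpectrum _)›
  have : SheafedSpace.IsOpenImmersion X.toΓSpecSheafedSpace :=
    .of_stalk_iso _ (.of_subsingleton _)
  have : Epi X.toΓSpecSheafedSpace.hom.base :=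
    (TopCat.epi_iff_surjective _).mpr fun _ => ⟨default, Subsingleton.elim _ _⟩
  have : IsIso X.toΓSpecSheafedSpace := SheafedSpace.IsOpenImmersion.to_iso _
  have : IsIso (LocallyRingedSpace.forgetToSheafedSpace.map X.toΓSpec) :=
    ‹IsIso X.toΓSpecSheafedSpace›
  exact isIso_of_reflects_iso _ LocallyRingedSpace.forgetToSheafedSpace

theorem onePoint_continuousFunctions_iso_Spec_real_general
    (Y : LocallyRingedSpace) [Unique Y.carrier]
    (e : ∀ U : Opens Y.carrier, Y.presheaf.obj (op U) ≃+* C(U, ℝ)) :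
    Nonempty (Y ≅ Spec.locallyRingedSpaceObj (CommRingCat.of ℝ)) ∧
    Nonempty (Unique (PrimeSpectrum ℝ)) ∧
    Nonempty
      ((Spec.locallyRingedSpaceObj (CommRingCat.of ℝ)).presheaf.obj (op ⊤) ≃+* ℝ) := by
  have : Unique (⊤ : Opens Y.carrier) := (Equiv.Set.univ Y.carrier).unique
  let eΓ : LocallyRingedSpace.Γ.obj (op Y) ≃+* ℝ :=
    (e ⊤).trans (ContinuousMap.evalRingEquivOfUnique _ ℝ)
  have : Subsingleton (PrimeSpectrum (LocallyRingedSpace.Γ.obj (op Y))) :=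
    (PrimeSpectrum.homeomorphOfRingEquiv eΓ).injective.subsingleton
  have := Y.isIso_toΓSpec_of_subsingleton
  exact ⟨⟨asIso Y.toΓSpec ≪≫
      Spec.toLocallyRingedSpace.mapIso eΓ.toCommRingCatIso.symm.op⟩, ⟨inferInstance⟩,
    ⟨(StructureSheaf.globalSectionsIso (CommRingCat.of ℝ)).commRingCatIsoToRingEquiv.symm⟩⟩

/-- Let `Y` be a locally ringed space whose underlying
topological space has exactly one point and whose structure sheaf is the sheaf
of continuous real-valued functions: the sections over each open `U` are
identified, as a ring and compatibly with restriction, with `C(U, ℝ)`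
(over the empty set this is the zero ring).  Then `Y ≅ Spec ℝ` in the category
of locally ringed spaces; in particular the underlying space of `Spec ℝ` is a
single point and its global sections are isomorphic to `ℝ`. -/
theorem onePoint_continuousFunctions_iso_Spec_real
    (Y : LocallyRingedSpace) [Unique Y.carrier]
    (e : ∀ U : Opens Y.carrier, Y.presheaf.obj (op U) ≃+* C(U, ℝ))
    (he : ∀ (U V : Opens Y.carrier) (h : V ≤ U) (f : Y.presheaf.obj (op U)),
      e V (Y.presheaf.map (homOfLE h).op f) =
        (e U f).comp ⟨Set.inclusion h, continuous_inclusion h⟩) :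
    Nonempty (Y ≅ Spec.locallyRingedSpaceObj (CommRingCat.of ℝ)) ∧
    Nonempty (Unique (PrimeSpectrum ℝ)) ∧
    Nonempty
      ((Spec.locallyRingedSpaceObj (CommRingCat.of ℝ)).presheaf.obj (op ⊤) ≃+* ℝ) :=
  onePoint_continuousFunctions_iso_Spec_real_general Y e
end
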